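/- Let Λ be an artin algebra and q a class of indecomposable finite length Λ-modules that is closed under successors and numerically determined by an additive function δ: K₀(Λ) → ℤ (an indecomposable finite length module M lies in q iff δ(M) > 0). If N is a Λ-module with Hom(Q,N) = 0 for all Q in q and N has a finite length submodule U such that N/U is generated by q, then N has finite length. -/

import Mathlib

/-!
Every finite length submodule `V` of `N` has `δ V ≤ 0`: by induction on length it splits into
indecomposable summands, and an indecomposable summand with positive `δ` would lie in `q` and
embed into `N`. Dually, every nonzero image of a module of `q` has positive `δ`, since its
indecomposable summands are successors of a module of `q`. Now if `V` is a finite length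
submodule with `N/V` generated by `q` and `N/V ≠ 0`, some `Q ∈ q` maps nonzero to `N/V`, and the
preimage `V'` of its image is again of finite length with `N/V'` generated by `q`, but
`δ V' > δ V`. As `δ` is bounded above on such `V`, one with maximal `δ` is all of `N`.
-/

universe u v

/-- `g(q)`: the class of modules generated by `q`. -/
def genBy {Λ : Type u} [Ring Λ] (q : Set (ModuleCat.{v} Λ)) : Set (ModuleCat.{v} Λ) :=
  {M | ∃ (ι : Type v) (N : ι → ModuleCat.{v} Λ), (∀ i, N i ∈ q) ∧
    ∃ f : (DirectSum ι fun i => ↥(N i)) →ₗ[Λ] M, Function.Surjective f}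

/-- A module is indecomposable: it is non-zero and admits no non-trivial direct sum
decomposition. -/
def Indec {Λ : Type u} [Ring Λ] (M : ModuleCat.{v} Λ) : Prop :=
  Nontrivial ↥M ∧ ∀ U V : Submodule Λ M, IsCompl U V → U = ⊥ ∨ V = ⊥

section FiniteLength

variable {R M P : Type*} [Ring R] [AddCommGroup M] [Module R M] [AddCommGroup P] [Module R P]

theorem IsFiniteLength.of_ker_of_range (f : M →ₗ[R] P) (hker : IsFiniteLength R (LinearMap.ker f))
    (hrange : IsFiniteLength R (LinearMap.range f)) : IsFiniteLength R M := by
  rw [← Module.length_ne_top_iff] at hker hrange ⊢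
  have hexact : Function.Exact (LinearMap.ker f).subtype f.rangeRestrict := fun x => by
    simp [Subtype.ext_iff]
  rw [Module.length_eq_add_of_exact _ _ (LinearMap.ker f).injective_subtype
    f.surjective_rangeRestrict hexact]
  exact WithTop.add_ne_top.mpr ⟨hker, hrange⟩

end FiniteLength

section Additive

variable {Λ : Type u} [Ring Λ]

structure IsAdditiveOnFiniteLength (δ : ModuleCat.{v} Λ → ℤ) : Prop where
  eq_of_linearEquiv : ∀ M N : ModuleCat.{v} Λ, IsFiniteLength Λ ↥M → (↥M ≃ₗ[Λ] ↥N) → δ M = δ N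
  eq_add_quotient : ∀ (M : ModuleCat.{v} Λ), IsFiniteLength Λ ↥M → ∀ U : Submodule Λ M,
    δ M = δ (ModuleCat.of Λ U) + δ (ModuleCat.of Λ (↥M ⧸ U))

namespace IsAdditiveOnFiniteLength

variable {δ : ModuleCat.{v} Λ → ℤ}

theorem eq_zero_of_subsingleton (hδ : IsAdditiveOnFiniteLength δ) (M : ModuleCat.{v} Λ)
    [Subsingleton M] : δ M = 0 := by
  have h := hδ.eq_add_quotient M .of_subsingleton ⊥
  rw [hδ.eq_of_linearEquiv (.of Λ (⊥ : Submodule Λ M)) M .of_subsingleton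
    (Submodule.botEquivPUnit.trans (LinearEquiv.ofSubsingleton _ _)),
    hδ.eq_of_linearEquiv (.of Λ (M ⧸ (⊥ : Submodule Λ M))) M .of_subsingleton
    (Submodule.quotEquivOfEqBot ⊥ rfl)] at h
  omega

theorem eq_add_of_isCompl (hδ : IsAdditiveOnFiniteLength δ) {M : ModuleCat.{v} Λ}
    (hM : IsFiniteLength Λ M) {A B : Submodule Λ M} (h : IsCompl A B) :
    δ M = δ (.of Λ A) + δ (.of Λ B) := by
  rw [hδ.eq_add_quotient M hM A, hδ.eq_of_linearEquiv (.of Λ (M ⧸ A)) (.of Λ B)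
    (hM.of_surjective A.mkQ_surjective) (Submodule.quotientEquivOfIsCompl A B h)]

theorem eq_ker_add_range (hδ : IsAdditiveOnFiniteLength δ) {M : ModuleCat.{v} Λ}
    (hM : IsFiniteLength Λ M) {P : Type v} [AddCommGroup P] [Module Λ P] (f : M →ₗ[Λ] P) :
    δ M = δ (.of Λ (LinearMap.ker f)) + δ (.of Λ (LinearMap.range f)) := by
  rw [hδ.eq_add_quotient M hM _, hδ.eq_of_linearEquiv (.of Λ (M ⧸ LinearMap.ker f))
    (.of Λ (LinearMap.range f)) (hM.of_surjective (Submodule.mkQ_surjective _))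
    f.quotKerEquivRange]

theorem apply_of_forall_indec (hδ : IsAdditiveOnFiniteLength δ) {p : ℤ → Prop}
    (hp : ∀ a b, p a → p b → p (a + b)) {C : ModuleCat.{v} Λ → Prop}
    (hC : ∀ M : ModuleCat.{v} Λ, C M → ∀ A B : Submodule Λ M, IsCompl A B → C (.of Λ A))
    (hind : ∀ M : ModuleCat.{v} Λ, IsFiniteLength Λ M → C M → Indec M → p (δ M))
    (M : ModuleCat.{v} Λ) (hM : IsFiniteLength Λ M) (hCM : C M) [Nontrivial M] : p (δ M) := by
  induction hn : Module.length Λ M using WellFoundedLT.induction generalizing M with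
  | ind n ih =>
  by_cases hMind : Indec M
  · exact hind M hM hCM hMind
  obtain ⟨A, B, hAB, hA, hB⟩ : ∃ A B : Submodule Λ M, IsCompl A B ∧ A ≠ ⊥ ∧ B ≠ ⊥ := by
    simpa [Indec, ‹Nontrivial M›] using hMind
  obtain ⟨_, _⟩ := isFiniteLength_iff_isNoetherian_isArtinian.mp hM
  have hsummand {A B : Submodule Λ M} (hAB : IsCompl A B) (hA : A ≠ ⊥) (hB : B ≠ ⊥) :
      p (δ (.of Λ A)) := by
    have : Nontrivial A := Submodule.nontrivial_iff_ne_bot.mpr hA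
    refine ih _ ?_ _ (hM.of_injective A.injective_subtype) (hC M hCM A B hAB) rfl
    exact hn ▸ Submodule.length_lt fun hAtop => hB (eq_bot_of_top_isCompl (hAtop ▸ hAB))
  rw [hδ.eq_add_of_isCompl hM hAB]
  exact hp _ _ (hsummand hAB hA hB) (hsummand hAB.symm hB hA)

end IsAdditiveOnFiniteLength

end Additive

section Successors

variable {Λ : Type u} [Ring Λ]

def IsClosedUnderSuccessors (q : Set (ModuleCat.{v} Λ)) : Prop :=
  ∀ M₁ ∈ q, ∀ M₂ : ModuleCat.{v} Λ, IsFiniteLength Λ ↥M₂ → Indec M₂ →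
    (∃ f : M₁ →ₗ[Λ] M₂, f ≠ 0) → M₂ ∈ q

def IsNumericallyDetermined (q : Set (ModuleCat.{v} Λ)) (δ : ModuleCat.{v} Λ → ℤ) : Prop :=
  ∀ M : ModuleCat.{v} Λ, IsFiniteLength Λ ↥M → Indec M → (M ∈ q ↔ 0 < δ M)

theorem exists_ne_zero_of_mem_genBy {q : Set (ModuleCat.{v} Λ)} {M : ModuleCat.{v} Λ}
    (hM : M ∈ genBy q) [Nontrivial M] : ∃ Q ∈ q, ∃ g : Q →ₗ[Λ] M, g ≠ 0 := by
  classical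
  obtain ⟨ι, Q, hQ, f, hf⟩ := hM
  by_contra! h
  have hf0 : f = 0 := DirectSum.linearMap_ext Λ fun i => h (Q i) (hQ i) _
  obtain ⟨x, hx⟩ := exists_ne (0 : M)
  obtain ⟨y, rfl⟩ := hf x
  exact hx (by simp [hf0])

theorem mem_genBy_of_surjective {q : Set (ModuleCat.{v} Λ)} {M : ModuleCat.{v} Λ}
    (hM : M ∈ genBy q) {P : Type v} [AddCommGroup P] [Module Λ P] (g : M →ₗ[Λ] P)
    (hg : Function.Surjective g) : ModuleCat.of Λ P ∈ genBy q := by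
  obtain ⟨ι, Q, hQ, f, hf⟩ := hM
  exact ⟨ι, Q, hQ, g ∘ₗ f, hg.comp hf⟩

namespace IsAdditiveOnFiniteLength

variable {q : Set (ModuleCat.{v} Λ)} {δ : ModuleCat.{v} Λ → ℤ}

theorem apply_nonpos_of_hom_eq_zero (hδ : IsAdditiveOnFiniteLength δ)
    (hnum : IsNumericallyDetermined q δ) {N : ModuleCat.{v} Λ}
    (hN : ∀ Q ∈ q, ∀ f : Q →ₗ[Λ] N, f = 0) (V : Submodule Λ N) (hV : IsFiniteLength Λ V) :
    δ (.of Λ V) ≤ 0 := by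
  rcases subsingleton_or_nontrivial V with _ | _
  · exact (hδ.eq_zero_of_subsingleton (.of Λ V)).le
  refine hδ.apply_of_forall_indec (p := (· ≤ 0)) (fun a b ha hb => by omega)
    (C := fun M => ∃ f : M →ₗ[Λ] N, Function.Injective f) ?_ ?_ _ hV
    ⟨V.subtype, V.injective_subtype⟩
  · rintro M ⟨f, hf⟩ A B -
    exact ⟨f ∘ₗ A.subtype, hf.comp A.injective_subtype⟩
  · rintro M hM ⟨f, hf⟩ hMind
    have : Nontrivial M := hMind.1
    refine not_lt.mp fun hpos => ?_
    have hf0 := hN M ((hnum M hM hMind).mpr hpos) f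
    obtain ⟨x, hx⟩ := exists_ne (0 : M)
    exact hx (hf (by simp [hf0]))

theorem apply_range_pos (hδ : IsAdditiveOnFiniteLength δ) (hsucc : IsClosedUnderSuccessors q)
    (hnum : IsNumericallyDetermined q δ) {Q : ModuleCat.{v} Λ} (hQ : Q ∈ q)
    (hQfl : IsFiniteLength Λ Q) {M : Type v} [AddCommGroup M] [Module Λ M] (g : Q →ₗ[Λ] M)
    (hg : g ≠ 0) : 0 < δ (.of Λ (LinearMap.range g)) := by
  have : Nontrivial (LinearMap.range g) :=
    Submodule.nontrivial_iff_ne_bot.mpr (LinearMap.range_eq_bot.not.mpr hg)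
  refine hδ.apply_of_forall_indec (p := (0 < ·)) (fun a b ha hb => by omega)
    (C := fun X => ∃ Q ∈ q, ∃ g : Q →ₗ[Λ] X, Function.Surjective g) ?_ ?_ _
    (hQfl.of_surjective g.surjective_rangeRestrict)
    ⟨Q, hQ, g.rangeRestrict, g.surjective_rangeRestrict⟩
  · rintro X ⟨Q, hQ, g, hg⟩ A B hAB
    exact ⟨Q, hQ, A.projectionOnto B hAB ∘ₗ g, (A.projectionOnto_surjective hAB).comp hg⟩
  · rintro X hX ⟨Q, hQ, g, hg⟩ hXind
    have : Nontrivial X := hXind.1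
    have hg0 : g ≠ 0 := fun h => by
      obtain ⟨x, hx⟩ := exists_ne (0 : X)
      obtain ⟨y, rfl⟩ := hg x
      exact hx (by simp [h])
    exact (hnum X hX hXind).mp (hsucc Q hQ X hX hXind ⟨g, hg0⟩)

theorem exists_apply_lt (hδ : IsAdditiveOnFiniteLength δ) (hsucc : IsClosedUnderSuccessors q)
    (hnum : IsNumericallyDetermined q δ) (hq : ∀ Q ∈ q, IsFiniteLength Λ Q)
    {N : ModuleCat.{v} Λ} {V : Submodule Λ N} (hV : IsFiniteLength Λ V)
    (hNV : ModuleCat.of Λ (N ⧸ V) ∈ genBy q) [Nontrivial (N ⧸ V)] :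
    ∃ V' : Submodule Λ N, IsFiniteLength Λ V' ∧ ModuleCat.of Λ (N ⧸ V') ∈ genBy q ∧
      δ (.of Λ V) < δ (.of Λ V') := by
  obtain ⟨Q, hQ, g, hg⟩ := exists_ne_zero_of_mem_genBy hNV
  set X := LinearMap.range g
  set V' := X.comap V.mkQ
  have hVV' : V ≤ V' := V.ker_mkQ ▸ LinearMap.ker_le_comap _
  set f := V.mkQ ∘ₗ V'.subtype
  have hker : LinearMap.ker f ≃ₗ[Λ] V :=
    LinearEquiv.ofEq _ _ (by rw [LinearMap.ker_comp, Submodule.ker_mkQ]) ≪≫ₗ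
      Submodule.comapSubtypeEquivOfLe hVV'
  have hrange : LinearMap.range f = X := by
    rw [LinearMap.range_comp, Submodule.range_subtype,
      Submodule.map_comap_eq_of_surjective V.mkQ_surjective]
  have hX : IsFiniteLength Λ X := (hq Q hQ).of_surjective g.surjective_rangeRestrict
  have hkerfl : IsFiniteLength Λ (LinearMap.ker f) := hker.symm.isFiniteLength hV
  have hV' : IsFiniteLength Λ V' := .of_ker_of_range f hkerfl (hrange ▸ hX)
  refine ⟨V', hV', mem_genBy_of_surjective hNV _ (Submodule.factor_surjective hVV'), ?_⟩
  rw [hδ.eq_ker_add_range (M := .of Λ V') hV' f, hrange,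
    hδ.eq_of_linearEquiv (.of Λ (LinearMap.ker f)) (.of Λ V) hkerfl hker]
  linarith [hδ.apply_range_pos hsucc hnum hQ (hq Q hQ) g hg]

end IsAdditiveOnFiniteLength

end Successors

theorem stmt_9_general {Λ : Type u} [Ring Λ] (q : Set (ModuleCat.{v} Λ))
    (hq : ∀ Q ∈ q, IsFiniteLength Λ ↥Q ∧ Indec Q)
    -- `q` is closed under successors
    (hsucc : ∀ M₁ ∈ q, ∀ M₂ : ModuleCat.{v} Λ, IsFiniteLength Λ ↥M₂ → Indec M₂ →
      (∃ f : M₁ →ₗ[Λ] M₂, f ≠ 0) → M₂ ∈ q)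
    -- `δ` is additive on short exact sequences of finite length modules
    (δ : ModuleCat.{v} Λ → ℤ)
    (hiso : ∀ M N : ModuleCat.{v} Λ, IsFiniteLength Λ ↥M → (↥M ≃ₗ[Λ] ↥N) → δ M = δ N)
    (hadd : ∀ (M : ModuleCat.{v} Λ), IsFiniteLength Λ ↥M → ∀ U : Submodule Λ M,
      δ M = δ (ModuleCat.of Λ U) + δ (ModuleCat.of Λ (↥M ⧸ U)))
    -- `q` is numerically determined by `δ`
    (hnum : ∀ M : ModuleCat.{v} Λ, IsFiniteLength Λ ↥M → Indec M → (M ∈ q ↔ 0 < δ M))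
    -- the module `N`
    (N : ModuleCat.{v} Λ)
    (hN : ∀ Q ∈ q, ∀ f : Q →ₗ[Λ] N, f = 0)
    (U : Submodule Λ N) (hU : IsFiniteLength Λ ↥U)
    (hNU : ModuleCat.of Λ (↥N ⧸ U) ∈ genBy q) :
    IsFiniteLength Λ ↥N := by
  have hδ : IsAdditiveOnFiniteLength δ := ⟨hiso, hadd⟩
  obtain ⟨_, ⟨V, hV, hNV, rfl⟩, hmax⟩ := Int.exists_greatest_of_bdd
    (P := fun z => ∃ V : Submodule Λ N, IsFiniteLength Λ V ∧
      ModuleCat.of Λ (N ⧸ V) ∈ genBy q ∧ δ (.of Λ V) = z)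
    ⟨0, by rintro _ ⟨V, hV, -, rfl⟩; exact hδ.apply_nonpos_of_hom_eq_zero hnum hN V hV⟩
    ⟨_, U, hU, hNU, rfl⟩
  have hVtop : V = ⊤ := by
    by_contra hne
    have : Nontrivial (N ⧸ V) := Submodule.Quotient.nontrivial_iff.mpr hne
    obtain ⟨V', hV', hNV', hlt⟩ :=
      hδ.exists_apply_lt hsucc hnum (fun Q hQ => (hq Q hQ).1) hV hNV
    exact (hmax _ ⟨V', hV', hNV', rfl⟩).not_gt hlt
  exact Submodule.topEquiv.isFiniteLength (hVtop ▸ hV)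

/-- Proposition 1 (a): Let `Λ` be an artin algebra (a finite dimensional algebra over a
field) and `q` a class of indecomposable finite length `Λ`-modules which is closed under
successors and numerically determined by an additive function `δ` on the Grothendieck
group of finite length modules (an indecomposable finite length module `M` belongs to
`q` iff `δ(M) > 0`). If `N` is a `Λ`-module with `Hom(q, N) = 0` possessing a finite
length submodule `U` such that `N/U` is generated by `q`, then `N` has finite length. -/
theorem stmt_9 {k : Type u} [Field k] {Λ : Type u} [Ring Λ] [Algebra k Λ]
    [FiniteDimensional k Λ] (q : Set (ModuleCat.{v} Λ))
    (hq : ∀ Q ∈ q, IsFiniteLength Λ ↥Q ∧ Indec Q)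
    -- `q` is closed under successors
    (hsucc : ∀ M₁ ∈ q, ∀ M₂ : ModuleCat.{v} Λ, IsFiniteLength Λ ↥M₂ → Indec M₂ →
      (∃ f : M₁ →ₗ[Λ] M₂, f ≠ 0) → M₂ ∈ q)
    -- `δ` is additive on short exact sequences of finite length modules
    (δ : ModuleCat.{v} Λ → ℤ)
    (hiso : ∀ M N : ModuleCat.{v} Λ, IsFiniteLength Λ ↥M → (↥M ≃ₗ[Λ] ↥N) → δ M = δ N)
    (hadd : ∀ (M : ModuleCat.{v} Λ), IsFiniteLength Λ ↥M → ∀ U : Submodule Λ M,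
      δ M = δ (ModuleCat.of Λ U) + δ (ModuleCat.of Λ (↥M ⧸ U)))
    -- `q` is numerically determined by `δ`
    (hnum : ∀ M : ModuleCat.{v} Λ, IsFiniteLength Λ ↥M → Indec M → (M ∈ q ↔ 0 < δ M))
    -- the module `N`
    (N : ModuleCat.{v} Λ)
    (hN : ∀ Q ∈ q, ∀ f : Q →ₗ[Λ] N, f = 0)
    (U : Submodule Λ N) (hU : IsFiniteLength Λ ↥U)
    (hNU : ModuleCat.of Λ (↥N ⧸ U) ∈ genBy q) :
    IsFiniteLength Λ ↥N :=
  stmt_9_general q hq hsucc δ hiso hadd hnum N hN U hU hNU
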